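/- Under the stationary two-sequence k-mer model, for positions i ≠ j in {1,…,n−k+1}, ∑_{W ∈ [L]^k} (1/π^W)·Cov[ Z_i^W, Z_j^W ] = 0, where Z_m^W = X_{1,m}^W − X_{2,m}^W and X_{ℓ,m}^W is the indicator of the event that the word W occurs in S_ℓ starting at position m (i.e., S_ℓ(m+j−1) = w_j for all j = 1,…,k). -/

import Mathlib

/-!
Both letters of a site have marginal `π` (the first because `M` is stochastic, the second because
`π` is stationary), so `E[X_{ℓ,m}^W] = π^W`, hence `E Z = 0` and the covariance is the alternating
sum of the four mixed moments `E[X_{ℓ,i}^W X_{ℓ',j}^W]`. Each of them has weighted sum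
`∑_W E[X_{ℓ,i}^W X_{ℓ',j}^W] / π^W = 1`: for `i < j` the sum over `W` collapses to
`E ∏_a [S_ℓ'(j+a) = S_ℓ(i+a)] / π(S_ℓ(i+a))`, and the sites `j+a` can be integrated out from the
last one down, since site `j+a` is read by no earlier factor; each contributes `π(c) / π(c) = 1`.
So the covariances sum to `1 - 1 - 1 + 1 = 0`.
-/

open Finset Function

section ProductWeight

variable {ι β : Type*} [Fintype ι] [DecidableEq ι]

theorem prod_comp_update_mul_apply (ν : β → ℝ) (ω : ι → β) (q : ι) (s : β) :
    (∏ p, ν (update ω q s p)) * ν (ω q) = (∏ p, ν (ω p)) * ν s := by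
  rw [Fintype.prod_eq_mul_prod_compl q, Fintype.prod_eq_mul_prod_compl q (fun p => ν (ω p)),
    update_self, prod_congr rfl fun p hp => by rw [update_of_ne (by simpa using hp)]]
  ring

variable [Fintype β]

def expectPi (ν : β → ℝ) (F : (ι → β) → ℝ) : ℝ :=
  ∑ ω : ι → β, (∏ p, ν (ω p)) * F ω

variable {ν : β → ℝ}

theorem expectPi_sub (F G : (ι → β) → ℝ) :
    expectPi ν (fun ω => F ω - G ω) = expectPi ν F - expectPi ν G := by
  simp only [expectPi, mul_sub, sum_sub_distrib]

theorem expectPi_sub_mul_sub (F G F' G' : (ι → β) → ℝ) :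
    expectPi ν (fun ω => (F ω - G ω) * (F' ω - G' ω)) =
      expectPi ν (fun ω => F ω * F' ω) - expectPi ν (fun ω => F ω * G' ω) -
        (expectPi ν (fun ω => G ω * F' ω) - expectPi ν (fun ω => G ω * G' ω)) := by
  simp only [← expectPi_sub]
  congr 1
  funext ω
  ring

theorem expectPi_one (hν : ∑ s, ν s = 1) : expectPi (ι := ι) ν (fun _ => 1) = 1 := by
  simp only [expectPi, mul_one]
  rw [← Fintype.prod_sum (fun _ s => ν s)]
  simp [hν]

theorem expectPi_apply_eq_expectPi_sum (hν : ∑ s, ν s = 1) (q : ι) (G : (ι → β) → β → ℝ)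
    (hG : ∀ ω s, G (update ω q s) = G ω) :
    expectPi ν (fun ω => G ω (ω q)) = expectPi ν (fun ω => ∑ s, ν s * G ω s) := by
  set F : β × (ι → β) → ℝ := fun x => ν x.1 * ((∏ p, ν (x.2 p)) * G x.2 (x.2 q))
  -- resampling coordinate `q`: `(s, ω) ↦ (ω q, ω[q ↦ s])` is a weight-preserving involution
  have swap : Involutive fun x : β × (ι → β) => (x.2 q, update x.2 q x.1) := by
    rintro ⟨s, ω⟩
    simp
  calc expectPi ν (fun ω => G ω (ω q))
      = ∑ x, F x := by
        rw [Fintype.sum_prod_type]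
        simp only [F, expectPi, ← mul_sum, ← sum_mul, hν, one_mul]
    _ = ∑ x : β × (ι → β), F (x.2 q, update x.2 q x.1) := (swap.bijective.sum_comp F).symm
    _ = expectPi ν (fun ω => ∑ s, ν s * G ω s) := by
        rw [Fintype.sum_prod_type, sum_comm]
        refine sum_congr rfl fun ω _ => ?_
        rw [mul_sum]
        refine sum_congr rfl fun s _ => ?_
        simp only [F, hG, update_self]
        rw [← mul_assoc, ← mul_assoc, mul_comm (ν (ω q)), prod_comp_update_mul_apply]

theorem expectPi_prod {k : ℕ} (hν : ∑ s, ν s = 1) (y : Fin k → ι) (hy : Injective y)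
    (g : Fin k → (ι → β) → β → ℝ) (c : Fin k → ℝ)
    (hg : ∀ a a', a ≤ a' → ∀ ω s, g a (update ω (y a') s) = g a ω)
    (hc : ∀ a ω, ∑ s, ν s * g a ω s = c a) :
    expectPi ν (fun ω => ∏ a, g a ω (ω (y a))) = ∏ a, c a := by
  induction k with
  | zero => simpa using expectPi_one (ι := ι) hν
  | succ k ih =>
    set G : (ι → β) → β → ℝ := fun ω t =>
      (∏ a : Fin k, g a.castSucc ω (ω (y a.castSucc))) * g (Fin.last k) ω t
    have hG : ∀ ω s, G (update ω (y (Fin.last k)) s) = G ω := by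
      intro ω s
      simp only [G, hg _ _ le_rfl]
      funext t
      congr 1
      refine prod_congr rfl fun a _ => ?_
      rw [hg _ _ (Fin.castSucc_lt_last a).le,
        update_of_ne (hy.ne (Fin.castSucc_lt_last a).ne)]
    calc expectPi ν (fun ω => ∏ a, g a ω (ω (y a)))
        = expectPi ν (fun ω => G ω (ω (y (Fin.last k)))) := by
          simp only [G, Fin.prod_univ_castSucc]
      _ = expectPi ν (fun ω => ∏ a : Fin k, g a.castSucc ω (ω (y a.castSucc))) *
            c (Fin.last k) := by
          rw [expectPi_apply_eq_expectPi_sum hν _ G hG, expectPi, expectPi, sum_mul]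
          refine sum_congr rfl fun ω _ => ?_
          rw [← hc (Fin.last k) ω, mul_sum, mul_sum]
          exact sum_congr rfl fun s _ => by dsimp only [G]; ring
      _ = ∏ a, c a := by
          rw [Fin.prod_univ_castSucc,
            ih (fun a => y a.castSucc) (hy.comp (Fin.castSucc_injective k)) _ _
              (fun a a' h => hg _ _ (Fin.castSucc_le_castSucc_iff.mpr h)) (fun a => hc _)]

end ProductWeight

section WordIndicator

variable {ι β α : Type*} [DecidableEq α] {k : ℕ}

def wordIndicator (f : β → α) (x : Fin k → ι) (W : Fin k → α) (ω : ι → β) : ℝ :=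
  if ∀ a, f (ω (x a)) = W a then 1 else 0

theorem wordIndicator_eq_prod (f : β → α) (x : Fin k → ι) (W : Fin k → α) (ω : ι → β) :
    wordIndicator f x W ω = ∏ a, if f (ω (x a)) = W a then 1 else 0 := by
  simp [wordIndicator, prod_boole]

theorem wordIndicator_eq_ite (f : β → α) (x : Fin k → ι) (W : Fin k → α) (ω : ι → β) :
    wordIndicator f x W ω = if (fun a => f (ω (x a))) = W then 1 else 0 := by
  simp only [wordIndicator, funext_iff]

theorem sum_inv_prod_mul_wordIndicator_mul [Fintype α] (π : α → ℝ) (f g : β → α)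
    (x y : Fin k → ι) (ω : ι → β) :
    ∑ W, (1 / ∏ a, π (W a)) * (wordIndicator f x W ω * wordIndicator g y W ω) =
      ∏ a, (if g (ω (y a)) = f (ω (x a)) then 1 else 0) / π (f (ω (x a))) := by
  simp only [wordIndicator_eq_ite f, ite_mul, one_mul, zero_mul, mul_ite, mul_zero,
    sum_ite_eq, mem_univ, if_true]
  rw [wordIndicator_eq_prod, one_div, ← prod_inv_distrib, ← prod_mul_distrib]
  exact prod_congr rfl fun a _ => by rw [div_eq_mul_inv, mul_comm]

variable [Fintype ι] [DecidableEq ι] [Fintype β] {ν : β → ℝ} {π : α → ℝ}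

theorem expectPi_wordIndicator (hν : ∑ s, ν s = 1) {f : β → α}
    (hf : ∀ c, ∑ s with f s = c, ν s = π c) {x : Fin k → ι} (hx : Injective x) (W : Fin k → α) :
    expectPi ν (wordIndicator f x W) = ∏ a, π (W a) := by
  rw [show wordIndicator f x W = _ from funext (wordIndicator_eq_prod f x W)]
  refine expectPi_prod hν x hx (fun a _ s => if f s = W a then 1 else 0) (fun a => π (W a))
    (fun _ _ _ _ _ => rfl) fun a _ => ?_
  rw [← hf, sum_filter]
  simp only [mul_boole]

theorem sum_inv_prod_mul_expectPi_wordIndicator_mul [Fintype α] (hν : ∑ s, ν s = 1)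
    (hπ : ∀ c, π c ≠ 0) {g : β → α} (hg : ∀ c, ∑ s with g s = c, ν s = π c) (f : β → α)
    {x y : Fin k → ι} (hy : Injective y) (hxy : ∀ a a', a ≤ a' → x a ≠ y a') :
    ∑ W, (1 / ∏ a, π (W a)) *
      expectPi ν (fun ω => wordIndicator f x W ω * wordIndicator g y W ω) = 1 := by
  calc ∑ W, (1 / ∏ a, π (W a)) *
        expectPi ν (fun ω => wordIndicator f x W ω * wordIndicator g y W ω)
      = expectPi ν (fun ω => ∑ W, (1 / ∏ a, π (W a)) *
          (wordIndicator f x W ω * wordIndicator g y W ω)) := by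
        simp only [expectPi, mul_sum]
        rw [sum_comm]
        exact sum_congr rfl fun ω _ => sum_congr rfl fun W _ => by ring
    _ = expectPi ν (fun ω =>
          ∏ a, (if g (ω (y a)) = f (ω (x a)) then 1 else 0) / π (f (ω (x a)))) := by
        simp only [sum_inv_prod_mul_wordIndicator_mul]
    _ = ∏ _a : Fin k, (1 : ℝ) := by
        refine expectPi_prod hν y hy
          (fun a ω s => (if g s = f (ω (x a)) then 1 else 0) / π (f (ω (x a)))) 1
          (fun a a' h ω s => by simp only [update_of_ne (hxy a a' h)]) fun a ω => ?_
        simp only [← mul_div_assoc, mul_boole, ← sum_div, ← sum_filter, hg]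
        exact div_self (hπ _)
    _ = 1 := prod_const_one

end WordIndicator

section Window

variable {k n : ℕ}

def window (hkn : k ≤ n) (m : Fin (n - k + 1)) (a : Fin k) : Fin n :=
  Fin.castLE (by have := m.isLt; omega) (Fin.natAdd m a)

theorem window_val (hkn : k ≤ n) (m : Fin (n - k + 1)) (a : Fin k) :
    (window hkn m a : ℕ) = m + a :=
  rfl

theorem window_injective (hkn : k ≤ n) (m : Fin (n - k + 1)) : Injective (window hkn m) :=
  fun a b h => Fin.ext (by simpa [Fin.ext_iff, window_val] using h)

theorem window_ne_window_of_lt (hkn : k ≤ n) {i j : Fin (n - k + 1)} (hij : i < j)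
    {a a' : Fin k} (h : a ≤ a') : window hkn i a ≠ window hkn j a' := by
  rw [Fin.lt_def] at hij
  rw [Fin.le_def] at h
  rw [ne_eq, Fin.ext_iff, window_val, window_val]
  omega

variable {β α : Type*} [Fintype β] [Fintype α] [DecidableEq α] {ν : β → ℝ} {π : α → ℝ}

theorem sum_inv_prod_mul_expectPi_window_mul (hν : ∑ s, ν s = 1) (hπ : ∀ c, π c ≠ 0)
    {f g : β → α} (hf : ∀ c, ∑ s with f s = c, ν s = π c)
    (hg : ∀ c, ∑ s with g s = c, ν s = π c) (hkn : k ≤ n) {i j : Fin (n - k + 1)} (hij : i ≠ j) :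
    ∑ W, (1 / ∏ a, π (W a)) * expectPi ν (fun ω =>
      wordIndicator f (window hkn i) W ω * wordIndicator g (window hkn j) W ω) = 1 := by
  rcases hij.lt_or_gt with h | h
  · exact sum_inv_prod_mul_expectPi_wordIndicator_mul hν hπ hg f (window_injective hkn j)
      fun _ _ => window_ne_window_of_lt hkn h
  · simp only [mul_comm (wordIndicator f _ _ _)]
    exact sum_inv_prod_mul_expectPi_wordIndicator_mul hν hπ hf g (window_injective hkn i)
      fun _ _ => window_ne_window_of_lt hkn h

end Window

section Stationary

variable {α : Type*} [Fintype α] (M : Matrix α α ℝ) (π : α → ℝ)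

theorem sum_mul_transition_eq_one (hM1 : ∀ w, ∑ u, M w u = 1) (hπ1 : ∑ w, π w = 1) :
    ∑ s : α × α, π s.1 * M s.1 s.2 = 1 := by
  simp [Fintype.sum_prod_type, ← mul_sum, hM1, hπ1]

theorem sum_fst_eq_mul_transition [DecidableEq α] (hM1 : ∀ w, ∑ u, M w u = 1) (c : α) :
    ∑ s : α × α with s.1 = c, π s.1 * M s.1 s.2 = π c := by
  rw [sum_filter, Fintype.sum_prod_type]
  simp [← mul_sum, hM1]

theorem sum_snd_eq_mul_transition [DecidableEq α] (hstat : ∀ u, ∑ w, π w * M w u = π u) (c : α) :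
    ∑ s : α × α with s.2 = c, π s.1 * M s.1 s.2 = π c := by
  rw [sum_filter, Fintype.sum_prod_type]
  simp [hstat]

end Stationary

theorem kmer_weighted_covariance_sum_eq_zero
    (L k n : ℕ) (hkn : k ≤ n)
    (M : Matrix (Fin L) (Fin L) ℝ)
    (hM1 : ∀ w, ∑ u, M w u = 1)
    (π : Fin L → ℝ)
    (hπ0 : ∀ w, 0 < π w)
    (hπ1 : ∑ w, π w = 1)
    (hstat : ∀ u, ∑ w, π w * M w u = π u)
    (prob : (Fin n → Fin L × Fin L) → ℝ)
    (hprob : ∀ ω, prob ω = ∏ i, π (ω i).1 * M (ω i).1 (ω i).2)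
    (E : ((Fin n → Fin L × Fin L) → ℝ) → ℝ)
    (hE : ∀ f, E f = ∑ ω, prob ω * f ω)
    (Z : Fin (n - k + 1) → (Fin k → Fin L) → (Fin n → Fin L × Fin L) → ℝ)
    (hZ : ∀ m W ω, Z m W ω =
      (if ∀ j : Fin k, (ω ⟨m.1 + j.1, by have := m.2; have := j.2; omega⟩).1 = W j
        then 1 else 0)
      - (if ∀ j : Fin k, (ω ⟨m.1 + j.1, by have := m.2; have := j.2; omega⟩).2 = W j
        then 1 else 0))
    (Cov : ((Fin n → Fin L × Fin L) → ℝ) → ((Fin n → Fin L × Fin L) → ℝ) → ℝ)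
    (hCov : ∀ f g, Cov f g = E (fun ω => f ω * g ω) - E f * E g)
    (i j : Fin (n - k + 1)) (hij : i ≠ j) :
    ∑ W : Fin k → Fin L, (1 / ∏ j', π (W j')) * Cov (Z i W) (Z j W) = 0 := by
  set ν : Fin L × Fin L → ℝ := fun s => π s.1 * M s.1 s.2
  have hν : ∑ s, ν s = 1 := sum_mul_transition_eq_one M π hM1 hπ1
  have hfst := sum_fst_eq_mul_transition M π hM1
  have hsnd := sum_snd_eq_mul_transition M π hstat
  have hE' : ∀ F, E F = expectPi ν F := fun F => by simp only [hE, hprob, expectPi, ν]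
  have hZ' : ∀ m W, Z m W = fun ω =>
      wordIndicator Prod.fst (window hkn m) W ω - wordIndicator Prod.snd (window hkn m) W ω :=
    fun m W => funext (hZ m W)
  have hEZ : ∀ m W, E (Z m W) = 0 := fun m W => by
    rw [hE', hZ', expectPi_sub, expectPi_wordIndicator hν hfst (window_injective hkn m),
      expectPi_wordIndicator hν hsnd (window_injective hkn m), sub_self]
  have hcross := fun f g => sum_inv_prod_mul_expectPi_window_mul hν (fun c => (hπ0 c).ne')
    (f := f) (g := g) (hkn := hkn) (hij := hij)
  calc ∑ W : Fin k → Fin L, (1 / ∏ j', π (W j')) * Cov (Z i W) (Z j W)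
      = ∑ W : Fin k → Fin L, (1 / ∏ j', π (W j')) * E (fun ω => Z i W ω * Z j W ω) := by
        simp only [hCov, hEZ, zero_mul, sub_zero]
    _ = (1 - 1) - (1 - 1) := by
        simp only [hE', hZ', expectPi_sub_mul_sub]
        simp only [mul_sub, sum_sub_distrib,
          hcross _ _ hfst hfst, hcross _ _ hfst hsnd, hcross _ _ hsnd hfst, hcross _ _ hsnd hsnd]
    _ = 0 := by ring
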